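/- arXiv:0808.0989 — 4 statements merged into one kernel-verified Lean document; each statement's English description precedes it below -/
import Mathlib

section
/- Let g be a positive integer and 0 < a ≤ b < ∞. There exist constants C ∈ (0,∞) and λ ∈ (0,1), depending only on g, a and b, such that for every n ≥ 1 and every symmetric positive definite n×n real matrix R which is banded with bandwidth g (i.e., R(i,j)=0 whenever |i−j|>g) and whose eigenvalues all lie in [a,b], the inverse V = R^{-1} satisfies |V(i,j)| ≤ C λ^{|i−j|} for all 1 ≤ i,j ≤ n. -/
open Matrix

noncomputable section

/-- Entry bound for `W * diagonal c * Wᴴ` with `W` having orthonormal rows. -/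
lemma entry_bound_aux {n : ℕ} (W : Matrix (Fin n) (Fin n) ℝ) (hW : W * Wᴴ = 1)
    (c : Fin n → ℝ) (M : ℝ) (hM : 0 ≤ M) (hc : ∀ l, |c l| ≤ M) (i j : Fin n) :
    |(W * diagonal c * Wᴴ) i j| ≤ M := by
  have hentry : (W * diagonal c * Wᴴ) i j = ∑ l, W i l * c l * W j l := by
    rw [Matrix.mul_apply]
    refine Finset.sum_congr rfl fun l _ => ?_
    rw [Matrix.mul_diagonal, Matrix.conjTranspose_apply, star_trivial]
  have hrow : ∀ p : Fin n, (∑ l, W p l ^ 2) = 1 := by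
    intro p
    have := congrFun (congrFun hW p) p
    simpa [Matrix.mul_apply, Matrix.conjTranspose_apply, Matrix.one_apply, pow_two] using this
  have hCS : (∑ l, |W i l| * |W j l|) ≤ 1 := by
    have h := Finset.sum_mul_sq_le_sq_mul_sq Finset.univ (fun l => |W i l|) (fun l => |W j l|)
    have h1 : (∑ l, |W i l| ^ 2) = 1 := by simpa [sq_abs] using hrow i
    have h2 : (∑ l, |W j l| ^ 2) = 1 := by simpa [sq_abs] using hrow j
    rw [h1, h2, mul_one] at h
    have hnn : (0:ℝ) ≤ ∑ l, |W i l| * |W j l| :=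
      Finset.sum_nonneg fun l _ => mul_nonneg (abs_nonneg _) (abs_nonneg _)
    nlinarith
  calc |(W * diagonal c * Wᴴ) i j| = |∑ l, W i l * c l * W j l| := by rw [hentry]
    _ ≤ ∑ l, |W i l * c l * W j l| := Finset.abs_sum_le_sum_abs _ _
    _ ≤ ∑ l, M * (|W i l| * |W j l|) := by
        refine Finset.sum_le_sum fun l _ => ?_
        rw [abs_mul, abs_mul]
        calc |W i l| * |c l| * |W j l|
            ≤ |W i l| * M * |W j l| :=
              mul_le_mul_of_nonneg_right
                (mul_le_mul_of_nonneg_left (hc l) (abs_nonneg _)) (abs_nonneg _)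
          _ = M * (|W i l| * |W j l|) := by ring
    _ = M * ∑ l, |W i l| * |W j l| := by rw [Finset.mul_sum]
    _ ≤ M * 1 := mul_le_mul_of_nonneg_left hCS hM
    _ = M := mul_one M

lemma rep_mul {n : ℕ} (W : Matrix (Fin n) (Fin n) ℝ) (hW : Wᴴ * W = 1)
    (c d : Fin n → ℝ) :
    (W * diagonal c * Wᴴ) * (W * diagonal d * Wᴴ) = W * diagonal (fun l => c l * d l) * Wᴴ := by
  have : (W * diagonal c * Wᴴ) * (W * diagonal d * Wᴴ)
      = W * (diagonal c * (Wᴴ * W) * diagonal d) * Wᴴ := by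
    simp only [Matrix.mul_assoc]
  rw [this, hW, mul_one, diagonal_mul_diagonal]

theorem statement5 (g : ℕ) (hg : 0 < g) (a b : ℝ) (ha : 0 < a) (hab : a ≤ b) :
    ∃ C : ℝ, 0 < C ∧ ∃ lam : ℝ, 0 < lam ∧ lam < 1 ∧
      ∀ (n : ℕ) (R : Matrix (Fin n) (Fin n) ℝ) (hR : R.IsHermitian),
        R.PosDef →
        (∀ i, hR.eigenvalues i ∈ Set.Icc a b) →
        (∀ i j : Fin n, (g : ℤ) < |(i : ℤ) - (j : ℤ)| → R i j = 0) →
        ∀ i j : Fin n, |R⁻¹ i j| ≤ C * lam ^ ((i : ℤ) - (j : ℤ)).natAbs := by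
  have hab0 : 0 < a + b := by linarith
  set t : ℝ := 2 / (a + b) with ht
  set r : ℝ := (b - a) / (a + b) with hr
  have hr0 : 0 ≤ r := div_nonneg (by linarith) hab0.le
  have hr1 : r < 1 := (div_lt_one hab0).mpr (by linarith)
  set ρ : ℝ := max r (1/2) with hρ
  have hρ0 : 0 < ρ := lt_of_lt_of_le (by norm_num) (le_max_right _ _)
  have hρ1 : ρ < 1 := max_lt hr1 (by norm_num)
  refine ⟨a⁻¹, inv_pos.mpr ha, ρ ^ ((g:ℝ)⁻¹), Real.rpow_pos_of_pos hρ0 _, ?_, ?_⟩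
  · exact Real.rpow_lt_one hρ0.le hρ1 (by positivity)
  intro n R hR hpos heig hband i j
  -- setup
  set μ : Fin n → ℝ := hR.eigenvalues with hμ
  set U : Matrix (Fin n) (Fin n) ℝ := (hR.eigenvectorUnitary : Matrix (Fin n) (Fin n) ℝ) with hU
  have hUU : U * Uᴴ = 1 := by
    simpa [Matrix.star_eq_conjTranspose] using
      (Matrix.mem_unitaryGroup_iff).mp hR.eigenvectorUnitary.2
  have hU'U : Uᴴ * U = 1 := by
    simpa [Matrix.star_eq_conjTranspose] using
      (Matrix.mem_unitaryGroup_iff').mp hR.eigenvectorUnitary.2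
  have hspec : R = U * diagonal μ * Uᴴ := by
    have := hR.spectral_theorem
    simpa [RCLike.ofReal_real_eq_id, Matrix.star_eq_conjTranspose] using this
  have hμa : ∀ l, a ≤ μ l := fun l => (heig l).1
  have hμb : ∀ l, μ l ≤ b := fun l => (heig l).2
  have hμpos : ∀ l, 0 < μ l := fun l => lt_of_lt_of_le ha (hμa l)
  -- inverse representation
  have hVrep : R⁻¹ = U * diagonal (fun l => (μ l)⁻¹) * Uᴴ := by
    apply Matrix.inv_eq_right_inv
    rw [hspec, rep_mul U hU'U]
    have : (fun l => μ l * (μ l)⁻¹) = fun _ => (1:ℝ) := by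
      funext l; exact mul_inv_cancel₀ (hμpos l).ne'
    rw [this, diagonal_one, mul_one, hUU]
  -- S and its powers
  set S : Matrix (Fin n) (Fin n) ℝ := 1 - t • R with hS
  have hSrep : S = U * diagonal (fun l => 1 - t * μ l) * Uᴴ := by
    have h1 : (1 : Matrix (Fin n) (Fin n) ℝ) = U * diagonal (fun _ => (1:ℝ)) * Uᴴ := by
      rw [diagonal_one, mul_one, hUU]
    have hdiag : diagonal (fun l => t * μ l) = t • diagonal μ := by
      rw [← diagonal_smul]; rfl
    have h2 : t • R = U * diagonal (fun l => t * μ l) * Uᴴ := by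
      rw [hdiag, hspec, mul_smul_comm, smul_mul_assoc]
    rw [hS, h1, h2, ← Matrix.sub_mul, ← Matrix.mul_sub, diagonal_sub]
  have hSpow : ∀ k : ℕ, S ^ k = U * diagonal (fun l => (1 - t * μ l) ^ k) * Uᴴ := by
    intro k
    induction k with
    | zero => simp only [pow_zero]; rw [diagonal_one, mul_one, hUU]
    | succ k ih =>
      rw [pow_succ, ih, hSrep, rep_mul U hU'U]
      simp_rw [← pow_succ]
  -- banded powers
  have hSband : ∀ (k : ℕ) (p q : Fin n), ((g * k : ℕ) : ℤ) < |(p : ℤ) - (q : ℤ)| →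
      (S ^ k) p q = 0 := by
    intro k
    induction k with
    | zero =>
      intro p q h
      simp only [Nat.mul_zero, Nat.cast_zero] at h
      have hpq : p ≠ q := by
        intro he; subst he; simp at h
      simp [Matrix.one_apply_ne hpq]
    | succ k ih =>
      intro p q h
      rw [pow_succ', Matrix.mul_apply]
      apply Finset.sum_eq_zero
      intro l _
      by_cases hpl : ((g : ℕ) : ℤ) < |(p : ℤ) - (l : ℤ)|
      · have hpl' : p ≠ l := by
          intro he; subst he
          rw [sub_self, abs_zero] at hpl
          exact (Int.natCast_nonneg g).not_gt hpl
        have hSpl : S p l = 0 := by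
          rw [hS]
          simp [Matrix.sub_apply, Matrix.one_apply_ne hpl', hband p l hpl]
        rw [hSpl, zero_mul]
      · have hlq : ((g * k : ℕ) : ℤ) < |(l : ℤ) - (q : ℤ)| := by
          push_neg at hpl
          have habs := abs_sub_abs_le_abs_sub ((p:ℤ) - (q:ℤ)) ((p:ℤ) - (l:ℤ))
          have he : (p:ℤ) - (q:ℤ) - ((p:ℤ) - (l:ℤ)) = (l:ℤ) - (q:ℤ) := by ring
          rw [he] at habs
          push_cast at h ⊢
          nlinarith [abs_nonneg ((l:ℤ) - (q:ℤ))]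
        rw [ih l q hlq, mul_zero]
  -- main computation
  set d : ℕ := ((i : ℤ) - (j : ℤ)).natAbs with hd
  set k0 : ℕ := (d + g - 1) / g with hk0
  set m : ℕ := (d + g - 1) % g with hm
  have hdiv : g * k0 + m = d + g - 1 := by
    rw [hk0, hm]; exact Nat.div_add_mod _ _
  have hmod : m < g := by rw [hm]; exact Nat.mod_lt _ hg
  have hk0d : d ≤ g * k0 := by
    by_contra hcon
    push_neg at hcon
    have h5 : g * k0 + m < d + (g - 1) :=
      add_lt_add_of_lt_of_le hcon (by omega)
    rw [hdiv] at h5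
    omega
  have h1 : g * k0 ≤ d + g - 1 := by rw [← hdiv]; exact Nat.le_add_right _ _
  have hk0lt : ∀ k, k < k0 → g * k < d := by
    intro k hk
    have h2 : g * (k + 1) ≤ g * k0 := Nat.mul_le_mul_left g hk
    have h3 : g * (k + 1) = g * k + g := by ring
    rw [h3] at h2
    have h4 : g * k + g ≤ d + g - 1 := le_trans h2 h1
    have h5 : g * k + g < d + g := lt_of_le_of_lt h4 (by omega)
    exact Nat.lt_of_add_lt_add_right h5
  -- decomposition
  have hRV : R * R⁻¹ = 1 := by
    apply Matrix.mul_nonsing_inv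
    exact isUnit_iff_ne_zero.mpr hpos.det_pos.ne'
  have hdecomp : R⁻¹ = S ^ k0 * R⁻¹ + t • ∑ k ∈ Finset.range k0, S ^ k := by
    have hgeo : (∑ k ∈ Finset.range k0, S ^ k) * (S - 1) = S ^ k0 - 1 := geom_sum_mul S k0
    have hs1 : S - 1 = -(t • R) := by rw [hS]; abel
    have h2 : (∑ k ∈ Finset.range k0, S ^ k) * ((S - 1) * R⁻¹) = (S ^ k0 - 1) * R⁻¹ := by
      rw [← Matrix.mul_assoc, hgeo]
    have hs2 : (S - 1) * R⁻¹ = -(t • (1 : Matrix (Fin n) (Fin n) ℝ)) := by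
      rw [hs1, Matrix.neg_mul, Matrix.smul_mul, hRV]
    rw [hs2, Matrix.sub_mul, Matrix.one_mul, Matrix.mul_neg, Matrix.mul_smul,
      Matrix.mul_one] at h2
    have h3 : R⁻¹ - S ^ k0 * R⁻¹ = t • ∑ k ∈ Finset.range k0, S ^ k := by
      rw [← neg_sub, ← h2, neg_neg]
    rw [← h3]; abel
  have hdabs : ((d : ℕ) : ℤ) = |(i : ℤ) - (j : ℤ)| := by
    rw [hd]; exact_mod_cast (Int.abs_eq_natAbs _).symm
  have hsum0 : (∑ k ∈ Finset.range k0, S ^ k) i j = 0 := by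
    rw [Matrix.sum_apply]
    apply Finset.sum_eq_zero
    intro k hk
    apply hSband
    rw [← hdabs]
    exact_mod_cast hk0lt k (Finset.mem_range.mp hk)
  have hVij : R⁻¹ i j = (S ^ k0 * R⁻¹) i j := by
    conv_lhs => rw [hdecomp]
    rw [Matrix.add_apply, Matrix.smul_apply, hsum0, smul_zero, add_zero]
  -- bound the entry
  have hprod : S ^ k0 * R⁻¹ = U * diagonal (fun l => (1 - t * μ l) ^ k0 * (μ l)⁻¹) * Uᴴ := by
    rw [hSpow k0, hVrep, rep_mul U hU'U]
  have hscalar : ∀ l, |(1 - t * μ l) ^ k0 * (μ l)⁻¹| ≤ ρ ^ k0 * a⁻¹ := by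
    intro l
    have h1' : |1 - t * μ l| ≤ ρ := by
      refine le_trans ?_ (le_max_left r (1/2))
      have key : 1 - t * μ l = (a + b - 2 * μ l) / (a + b) := by
        rw [ht]; field_simp
      rw [key, hr, abs_div, abs_of_pos hab0]
      gcongr
      rw [abs_le]
      constructor
      · nlinarith [hμb l]
      · nlinarith [hμa l]
    have h2' : |(μ l)⁻¹| ≤ a⁻¹ := by
      rw [abs_of_pos (inv_pos.mpr (hμpos l))]
      exact inv_anti₀ ha (hμa l)
    rw [abs_mul, abs_pow]
    exact mul_le_mul (pow_le_pow_left₀ (abs_nonneg _) h1' k0) h2' (abs_nonneg _)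
      (pow_nonneg hρ0.le k0)
  have hbound : |R⁻¹ i j| ≤ ρ ^ k0 * a⁻¹ := by
    rw [hVij, hprod]
    exact entry_bound_aux U hUU _ _ (by positivity) hscalar i j
  refine hbound.trans ?_
  have hrpow : (ρ ^ ((g:ℝ)⁻¹)) ^ d = ρ ^ ((g:ℝ)⁻¹ * d) := by
    rw [← Real.rpow_natCast (ρ ^ ((g:ℝ)⁻¹)) d, ← Real.rpow_mul hρ0.le]
  have hk0r : ρ ^ k0 ≤ ρ ^ ((g:ℝ)⁻¹ * (d:ℝ)) := by
    rw [← Real.rpow_natCast ρ k0]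
    apply Real.rpow_le_rpow_of_exponent_ge hρ0 hρ1.le
    have hgr : (0:ℝ) < g := by exact_mod_cast hg
    rw [inv_mul_le_iff₀ hgr]
    exact_mod_cast hk0d
  calc ρ ^ k0 * a⁻¹ ≤ ρ ^ ((g:ℝ)⁻¹ * (d:ℝ)) * a⁻¹ :=
        mul_le_mul_of_nonneg_right hk0r (inv_pos.mpr ha).le
    _ = a⁻¹ * (ρ ^ ((g:ℝ)⁻¹)) ^ d := by rw [hrpow]; ring
end
end

section
/- Let f be Lipschitz continuous and bounded on an interval [d₁,d₂] with d₁ < d₂, and set u_j = d₁ + (d₂−d₁)j/n for j=1,…,n. Then there exists a constant C' (depending only on K, L, f, d₁, d₂) such that for all n ≥ 1, all b with 0 < b ≤ 1 and nb ≥ 1, and uniformly over all τ ∈ ℝ, |n^{-1}∑_{j=1}^n K_b(u_j−τ)f(u_j) − (d₂−d₁)^{-1}∫_{d₁}^{d₂} K_b(u−τ)f(u)du| ≤ C'/(nb); i.e., the Riemann-sum kernel average equals the integral up to an error of order O(1/(nb)) uniformly in τ. -/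
set_option maxHeartbeats 1000000

open MeasureTheory

noncomputable section

lemma card_bound_aux (S : Finset ℕ) (A W : ℝ) (hW : 0 ≤ W)
    (hS : ∀ k ∈ S, A ≤ (k : ℝ) ∧ (k : ℝ) ≤ A + W) : (S.card : ℝ) ≤ W + 1 := by
  classical
  have hinj : Set.InjOn (fun k : ℕ => (k : ℤ)) S := fun a _ b _ h => by simpa using h
  have hcard : S.card = (S.image (fun k : ℕ => (k : ℤ))).card :=
    (Finset.card_image_of_injOn hinj).symm
  have hsub : S.image (fun k : ℕ => (k : ℤ)) ⊆ Finset.Icc ⌈A⌉ ⌊A + W⌋ := by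
    intro m hm
    obtain ⟨k, hk, rfl⟩ := Finset.mem_image.mp hm
    obtain ⟨h1, h2⟩ := hS k hk
    exact Finset.mem_Icc.mpr ⟨Int.ceil_le.mpr (by exact_mod_cast h1),
      Int.le_floor.mpr (by exact_mod_cast h2)⟩
  have hc : S.card ≤ (Finset.Icc ⌈A⌉ ⌊A + W⌋).card := hcard ▸ Finset.card_le_card hsub
  rw [Int.card_Icc] at hc
  rcases le_or_gt (⌊A + W⌋ + 1 - ⌈A⌉) 0 with h0 | h0
  · rw [Int.toNat_of_nonpos h0] at hc
    have hz : S.card = 0 := Nat.le_zero.mp hc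
    rw [hz]
    simpa using by linarith
  · have hc' : (S.card : ℝ) ≤ (((⌊A + W⌋ + 1 - ⌈A⌉).toNat : ℤ) : ℝ) := by exact_mod_cast hc
    rw [Int.toNat_of_nonneg h0.le] at hc'
    have hf : ((⌊A + W⌋ : ℤ) : ℝ) ≤ A + W := Int.floor_le _
    have hcc : A ≤ ((⌈A⌉ : ℤ) : ℝ) := Int.le_ceil _
    push_cast at hc'
    linarith

theorem statement6 (K : ℝ → ℝ) (L : ℝ) (hL : 0 < L)
    (hK_symm : ∀ t, K (-t) = K t) (CK : NNReal) (hK_lip : LipschitzWith CK K)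
    (CB : ℝ) (hK_bdd : ∀ t, K t ≤ CB)
    (hK_nonneg : ∀ t, 0 ≤ K t) (hK_supp : ∀ t, L < |t| → K t = 0)
    (hK_int : ∫ t, K t = 1)
    (f : ℝ → ℝ) (d₁ d₂ : ℝ) (hd : d₁ < d₂)
    (Cf : NNReal) (hf_lip : LipschitzOnWith Cf f (Set.Icc d₁ d₂))
    (Mf : ℝ) (hf_bdd : ∀ x ∈ Set.Icc d₁ d₂, |f x| ≤ Mf) :
    ∃ C' : ℝ, ∀ n : ℕ, 1 ≤ n → ∀ b : ℝ, 0 < b → b ≤ 1 → 1 ≤ (n : ℝ) * b → ∀ τ : ℝ,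
      |(n : ℝ)⁻¹ * ∑ j ∈ Finset.Icc 1 n,
            K ((d₁ + (d₂ - d₁) * (j : ℝ) / n - τ) / b) / b * f (d₁ + (d₂ - d₁) * (j : ℝ) / n) -
          (d₂ - d₁)⁻¹ * ∫ u in d₁..d₂, K ((u - τ) / b) / b * f u| ≤
        C' / ((n : ℝ) * b) := by
  classical
  have hCf0 : (0 : ℝ) ≤ Cf := Cf.coe_nonneg
  have hCK0 : (0 : ℝ) ≤ CK := CK.coe_nonneg
  have hCB0 : (0 : ℝ) ≤ CB := le_trans (hK_nonneg 0) (hK_bdd 0)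
  have hMf0 : (0 : ℝ) ≤ Mf := le_trans (abs_nonneg _) (hf_bdd d₁ ⟨le_refl _, hd.le⟩)
  set D : ℝ := d₂ - d₁ with hD_def
  have hD : 0 < D := sub_pos.mpr hd
  refine ⟨(Cf * CB + Mf * CK) * (2 * L + 3 * D), ?_⟩
  intro n hn b hb hb1 hnb τ
  have hn0 : (0 : ℝ) < (n : ℝ) := by exact_mod_cast Nat.lt_of_lt_of_le Nat.zero_lt_one hn
  have hn1 : (1 : ℝ) ≤ (n : ℝ) := by exact_mod_cast hn
  set h : ℝ := D / n with hh_def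
  have hh : 0 < h := div_pos hD hn0
  set g : ℝ → ℝ := fun x => K ((x - τ) / b) / b * f x with hg_def
  set u : ℕ → ℝ := fun j => d₁ + D * (j : ℝ) / n with hu_def
  -- basic facts about u
  have hu_eq : ∀ k : ℕ, u k = d₁ + h * k := by
    intro k
    simp only [hu_def, hh_def]
    ring
  have hu_step : ∀ k : ℕ, u (k + 1) - u k = h := by
    intro k
    rw [hu_eq, hu_eq]
    push_cast
    ring
  have hu_lt : ∀ k : ℕ, u k < u (k + 1) := by
    intro k
    have := hu_step k
    linarith
  have hu_mem : ∀ k : ℕ, k ≤ n → u k ∈ Set.Icc d₁ d₂ := by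
    intro k hk
    have hkn : (k : ℝ) ≤ (n : ℝ) := by exact_mod_cast hk
    constructor
    · simp only [hu_def]
      have : 0 ≤ D * (k : ℝ) / n := by positivity
      linarith
    · simp only [hu_def]
      have h1 : D * (k : ℝ) / n ≤ D := by
        rw [div_le_iff₀ hn0]
        nlinarith
      have h2 : d₁ + D = d₂ := by rw [hD_def]; ring
      linarith
  -- continuity and integrability of g
  have hg_cont : ContinuousOn g (Set.Icc d₁ d₂) := by
    apply ContinuousOn.mul
    · exact ((hK_lip.continuous.comp (by continuity)).div_const b).continuousOn
    · exact hf_lip.continuousOn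
  have hg_int : ∀ k < n, IntervalIntegrable g volume (u k) (u (k + 1)) := by
    intro k hk
    apply ContinuousOn.intervalIntegrable
    apply hg_cont.mono
    rw [Set.uIcc_of_le (hu_lt k).le]
    exact Set.Icc_subset_Icc (hu_mem k hk.le).1 (hu_mem (k + 1) hk).2
  -- split the integral
  have h0 : u 0 = d₁ := by simp [hu_eq]
  have hnn : u n = d₂ := by
    rw [hu_eq]
    have h1 : h * n = D := by rw [hh_def]; field_simp
    rw [h1, hD_def]; ring
  have hsplit : ∫ x in d₁..d₂, g x = ∑ k ∈ Finset.range n, ∫ x in u k..u (k + 1), g x := by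
    conv_lhs => rw [← h0, ← hnn]
    exact (intervalIntegral.sum_integral_adjacent_intervals hg_int).symm
  have hsum : ∑ j ∈ Finset.Icc 1 n, g (u j) = ∑ k ∈ Finset.range n, g (u (k + 1)) := by
    rw [← Finset.Ico_add_one_right_eq_Icc, Finset.sum_Ico_eq_sum_range]
    simp [Nat.add_comm]
  set Ab : ℝ := Cf * CB / b + Mf * CK / b ^ 2 with hAb_def
  have hAb0 : 0 ≤ Ab := by positivity
  suffices H : |(n : ℝ)⁻¹ * ∑ j ∈ Finset.Icc 1 n, g (u j) - D⁻¹ * ∫ x in d₁..d₂, g x| ≤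
      (Cf * CB + Mf * CK) * (2 * L + 3 * D) / (n * b) by
    simp only [hg_def, hu_def] at H ⊢
    exact H
  rw [hsplit, hsum, Finset.mul_sum, Finset.mul_sum, ← Finset.sum_sub_distrib]
  -- per-interval bound
  have hterm : ∀ k ∈ Finset.range n,
      |(n : ℝ)⁻¹ * g (u (k + 1)) - D⁻¹ * ∫ x in u k..u (k + 1), g x| ≤
        (if |u (k + 1) - τ| ≤ L * b + h then D⁻¹ * (h ^ 2 * Ab) else 0) := by
    intro k hk
    have hkn : k < n := Finset.mem_range.mp hk
    have hac : u k < u (k + 1) := hu_lt k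
    have hstep : u (k + 1) - u k = h := hu_step k
    have haI : u k ∈ Set.Icc d₁ d₂ := hu_mem k hkn.le
    have hcI : u (k + 1) ∈ Set.Icc d₁ d₂ := hu_mem (k + 1) hkn
    by_cases hcase : |u (k + 1) - τ| ≤ L * b + h
    · rw [if_pos hcase]
      have hinv : (n : ℝ)⁻¹ = D⁻¹ * h := by
        rw [hh_def]
        field_simp
      have hgint : IntervalIntegrable g volume (u k) (u (k + 1)) := hg_int k hkn
      have heq : (n : ℝ)⁻¹ * g (u (k + 1)) - D⁻¹ * ∫ x in u k..u (k + 1), g x =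
          D⁻¹ * ∫ x in u k..u (k + 1), (g (u (k + 1)) - g x) := by
        rw [intervalIntegral.integral_sub intervalIntegrable_const hgint,
          intervalIntegral.integral_const, smul_eq_mul, hstep, hinv]
        ring
      rw [heq, abs_mul, abs_inv, abs_of_pos hD]
      have hptw : ∀ x ∈ Set.uIoc (u k) (u (k + 1)), ‖g (u (k + 1)) - g x‖ ≤ Ab * h := by
        intro x hx
        rw [Set.uIoc_of_le hac.le] at hx
        have hxI : x ∈ Set.Icc d₁ d₂ := ⟨le_trans haI.1 hx.1.le, le_trans hx.2 hcI.2⟩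
        have hcx0 : 0 ≤ u (k + 1) - x := by linarith [hx.2]
        have hcxh : u (k + 1) - x ≤ h := by linarith [hx.1, hstep]
        have hKc : |K ((u (k + 1) - τ) / b)| ≤ CB := by
          rw [abs_of_nonneg (hK_nonneg _)]; exact hK_bdd _
        have hfd : |f (u (k + 1)) - f x| ≤ Cf * (u (k + 1) - x) := by
          have h2 := hf_lip.dist_le_mul (u (k + 1)) hcI x hxI
          rw [Real.dist_eq, Real.dist_eq] at h2
          rwa [abs_of_nonneg hcx0] at h2
        have hKd : |K ((u (k + 1) - τ) / b) - K ((x - τ) / b)| ≤ CK * ((u (k + 1) - x) / b) := by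
          have h2 := hK_lip.dist_le_mul ((u (k + 1) - τ) / b) ((x - τ) / b)
          rw [Real.dist_eq, Real.dist_eq] at h2
          have heq2 : (u (k + 1) - τ) / b - (x - τ) / b = (u (k + 1) - x) / b := by ring
          rw [heq2, abs_div, abs_of_pos hb, abs_of_nonneg hcx0] at h2
          exact h2
        have hfx : |f x| ≤ Mf := hf_bdd x hxI
        have expand : g (u (k + 1)) - g x =
            K ((u (k + 1) - τ) / b) / b * (f (u (k + 1)) - f x) +
              (K ((u (k + 1) - τ) / b) - K ((x - τ) / b)) / b * f x := by
          simp only [hg_def]; ring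
        rw [Real.norm_eq_abs, expand]
        have e1 : |K ((u (k + 1) - τ) / b) / b * (f (u (k + 1)) - f x)| ≤
            CB / b * (Cf * (u (k + 1) - x)) := by
          rw [abs_mul, abs_div, abs_of_pos hb]
          apply mul_le_mul _ hfd (abs_nonneg _) (by positivity)
          exact div_le_div_of_nonneg_right hKc hb.le
        have e2 : |(K ((u (k + 1) - τ) / b) - K ((x - τ) / b)) / b * f x| ≤
            CK * ((u (k + 1) - x) / b) / b * Mf := by
          rw [abs_mul, abs_div, abs_of_pos hb]
          apply mul_le_mul _ hfx (abs_nonneg _) (by positivity)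
          exact div_le_div_of_nonneg_right hKd hb.le
        have e3 : CB / b * (Cf * (u (k + 1) - x)) + CK * ((u (k + 1) - x) / b) / b * Mf ≤
            Ab * h := by
          have e4 : CB / b * (Cf * (u (k + 1) - x)) + CK * ((u (k + 1) - x) / b) / b * Mf =
              Ab * (u (k + 1) - x) := by
            rw [hAb_def]; field_simp
          rw [e4]
          exact mul_le_mul_of_nonneg_left hcxh hAb0
        calc |K ((u (k + 1) - τ) / b) / b * (f (u (k + 1)) - f x) +
              (K ((u (k + 1) - τ) / b) - K ((x - τ) / b)) / b * f x| ≤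
            |K ((u (k + 1) - τ) / b) / b * (f (u (k + 1)) - f x)| +
              |(K ((u (k + 1) - τ) / b) - K ((x - τ) / b)) / b * f x| := abs_add_le _ _
          _ ≤ CB / b * (Cf * (u (k + 1) - x)) + CK * ((u (k + 1) - x) / b) / b * Mf :=
            add_le_add e1 e2
          _ ≤ Ab * h := e3
      have hbnd := intervalIntegral.norm_integral_le_of_norm_le_const hptw
      rw [Real.norm_eq_abs] at hbnd
      have habs : |u (k + 1) - u k| = h := by rw [hstep, abs_of_pos hh]
      rw [habs] at hbnd
      calc D⁻¹ * |∫ x in u k..u (k + 1), (g (u (k + 1)) - g x)| ≤ D⁻¹ * (Ab * h * h) :=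
          mul_le_mul_of_nonneg_left hbnd (by positivity)
        _ = D⁻¹ * (h ^ 2 * Ab) := by ring
    · rw [if_neg hcase]
      push_neg at hcase
      have hzero : ∀ x ∈ Set.Icc (u k) (u (k + 1)), g x = 0 := by
        intro x hx
        have hcx : u (k + 1) - x ≤ h := by linarith [hx.1, hstep]
        have hcx0 : 0 ≤ u (k + 1) - x := by linarith [hx.2]
        have htri : |u (k + 1) - τ| ≤ (u (k + 1) - x) + |x - τ| := by
          have he : u (k + 1) - τ = (u (k + 1) - x) + (x - τ) := by ring
          calc |u (k + 1) - τ| = |(u (k + 1) - x) + (x - τ)| := by rw [← he]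
            _ ≤ |u (k + 1) - x| + |x - τ| := abs_add_le _ _
            _ = (u (k + 1) - x) + |x - τ| := by rw [abs_of_nonneg hcx0]
        have hxfar : L * b < |x - τ| := by linarith
        have hK0 : K ((x - τ) / b) = 0 := by
          apply hK_supp
          rw [abs_div, abs_of_pos hb, lt_div_iff₀ hb]
          linarith
        simp only [hg_def, hK0]
        ring
      have hgc : g (u (k + 1)) = 0 :=
        hzero (u (k + 1)) ⟨hac.le, le_refl _⟩
      have hint0 : ∫ x in u k..u (k + 1), g x = 0 := by
        have heo : Set.EqOn g (fun _ => (0 : ℝ)) (Set.uIcc (u k) (u (k + 1))) := by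
          intro x hx
          rw [Set.uIcc_of_le hac.le] at hx
          exact hzero x hx
        rw [intervalIntegral.integral_congr heo]
        simp
      rw [hgc, hint0]
      simp
  -- sum up
  calc |∑ k ∈ Finset.range n,
        ((n : ℝ)⁻¹ * g (u (k + 1)) - D⁻¹ * ∫ x in u k..u (k + 1), g x)| ≤
      ∑ k ∈ Finset.range n,
        |(n : ℝ)⁻¹ * g (u (k + 1)) - D⁻¹ * ∫ x in u k..u (k + 1), g x| :=
      Finset.abs_sum_le_sum_abs _ _
    _ ≤ ∑ k ∈ Finset.range n,
        (if |u (k + 1) - τ| ≤ L * b + h then D⁻¹ * (h ^ 2 * Ab) else 0) :=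
      Finset.sum_le_sum hterm
    _ = (((Finset.range n).filter (fun k => |u (k + 1) - τ| ≤ L * b + h)).card : ℝ) *
        (D⁻¹ * (h ^ 2 * Ab)) := by
      rw [Finset.sum_ite, Finset.sum_const, Finset.sum_const_zero, add_zero, nsmul_eq_mul]
    _ ≤ (2 * L * b / h + 3) * (D⁻¹ * (h ^ 2 * Ab)) := by
      apply mul_le_mul_of_nonneg_right _ (by positivity)
      have hW0 : 0 ≤ 2 * L * b / h + 2 := by
        have : 0 ≤ 2 * L * b / h := div_nonneg (by positivity) hh.le
        linarith
      have hmem : ∀ k ∈ (Finset.range n).filter (fun k => |u (k + 1) - τ| ≤ L * b + h),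
          (τ - L * b - h - d₁) / h - 1 ≤ (k : ℝ) ∧
            (k : ℝ) ≤ ((τ - L * b - h - d₁) / h - 1) + (2 * L * b / h + 2) := by
        intro k hk
        rw [Finset.mem_filter] at hk
        obtain ⟨hlo, hhi⟩ := abs_le.mp hk.2
        have hue : u (k + 1) = d₁ + h * ((k : ℝ) + 1) := by
          rw [hu_eq]; push_cast; ring
        rw [hue] at hlo hhi
        constructor
        · have h2 : (τ - L * b - h - d₁) / h ≤ (k : ℝ) + 1 := by
            rw [div_le_iff₀ hh]
            nlinarith
          linarith
        · have h2 : (k : ℝ) + 1 ≤ (τ + L * b + h - d₁) / h := by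
            rw [le_div_iff₀ hh]
            nlinarith
          have h3 : (τ + L * b + h - d₁) / h =
              ((τ - L * b - h - d₁) / h - 1) + (2 * L * b / h + 2) + 1 := by
            field_simp
            ring
          linarith
      have := card_bound_aux _ _ _ hW0 hmem
      linarith
    _ ≤ (Cf * CB + Mf * CK) * (2 * L + 3 * D) / (n * b) := by
      have hE : (2 * L * b / h + 3) * (D⁻¹ * (h ^ 2 * Ab)) =
          2 * L * (Cf * CB) / n + 2 * L * (Mf * CK) / (n * b) +
            3 * D * (Cf * CB) / (n ^ 2 * b) + 3 * D * (Mf * CK) / (n ^ 2 * b ^ 2) := by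
        rw [hAb_def, hh_def]
        field_simp
        ring
      rw [hE]
      have hnb0 : 0 < (n : ℝ) * b := mul_pos hn0 hb
      have h1 : 2 * L * (Cf * CB) / (n : ℝ) ≤ 2 * L * (Cf * CB) / (n * b) :=
        div_le_div_of_nonneg_left (by positivity) hnb0 (by nlinarith)
      have h3 : 3 * D * (Cf * CB) / ((n : ℝ) ^ 2 * b) ≤ 3 * D * (Cf * CB) / (n * b) :=
        div_le_div_of_nonneg_left (by positivity) hnb0 (by nlinarith)
      have h4 : 3 * D * (Mf * CK) / ((n : ℝ) ^ 2 * b ^ 2) ≤ 3 * D * (Mf * CK) / (n * b) :=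
        div_le_div_of_nonneg_left (by positivity) hnb0 (by nlinarith)
      have hsum_eq : (Cf * CB + Mf * CK) * (2 * L + 3 * D) / ((n : ℝ) * b) =
          2 * L * (Cf * CB) / (n * b) + 2 * L * (Mf * CK) / (n * b) +
            3 * D * (Cf * CB) / (n * b) + 3 * D * (Mf * CK) / (n * b) := by
        field_simp
        ring
      rw [hsum_eq]
      linarith
end
end

section
/- Fix a nonnegative integer l and set t_j = j/n for j=1,…,n. There exists a constant C' (depending only on K, L and l) such that for all n ≥ 1, all b with 0 < b ≤ 1 and nb ≥ 1, and uniformly over all t ∈ [0,1], |n^{-1}∑_{j=1}^n K_b(t_j−t)((t_j−t)/b)^l − ∫_{−t/b}^{(1−t)/b} K(u)u^l du| ≤ C'/(nb); in particular, uniformly over indices i with nbL ≤ i ≤ n−nbL, n^{-1}∑_{j=1}^n K_b(t_j−t_i)(t_j−t_i)^l = b^l{∫_{−L}^{L} K(u)u^l du + O(1/(nb))}. -/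
/-!
The kernel vanishes outside `[-L, L]`, and by continuity also at `±L`; hence
`f u = K u * u ^ l` is supported in `(-L, L)`, and it is Lipschitz with some constant `C`, since
`K u * u ^ l = K u * c u ^ l` for the projection `c` onto `[-L, L]`. The sum is the right-endpoint
Riemann sum on the grid `j / n` of `g x = f ((x - t) / b) / b`, a `C / b ^ 2`-Lipschitz function
whose integral over `[0, 1]` is the integral of `f` over `[-t / b, (1 - t) / b]`. Each grid cell
contributes an error of at most `C / (b n) ^ 2`, and only the at most `2 n b L + 2` cells meeting the
support of `g` contribute at all, so the total error is `C (2 L + 2) / (n b)`. For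
`n b L ≤ i ≤ n - n b L` the limits `-t_i / b` and `(1 - t_i) / b` lie outside `(-L, L)`, which gives
the second claim after pulling out `b ^ l`.
-/

lemma dist_mul_pow_le {K : ℝ → ℝ} {L CB : ℝ} {CK : NNReal} (hL : 0 ≤ L)
    (hK_lip : LipschitzWith CK K) (hK_abs : ∀ t, |K t| ≤ CB) (hK_supp : ∀ t, L < |t| → K t = 0)
    (l : ℕ) (u v : ℝ) :
    dist (K u * u ^ l) (K v * v ^ l) ≤ (CK * L ^ l + CB * l * L ^ (l - 1)) * dist u v := by
  set c : ℝ → ℝ := fun x => max (min x L) (-L)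
  have hc_abs : ∀ x, |c x| ≤ L := fun x =>
    abs_le.mpr ⟨le_max_right _ _, max_le (min_le_right _ _) (by linarith)⟩
  have hc_dist : ∀ x y, |c x - c y| ≤ |x - y| := fun x y =>
    (abs_max_sub_max_le_abs _ _ _).trans <| by simpa using abs_min_sub_min_le_max x L y L
  have hc : ∀ x, K x * x ^ l = K x * c x ^ l := by
    intro x
    rcases le_or_gt |x| L with h | h
    · rw [show c x = x from by simp [c, (abs_le.mp h).1, (abs_le.mp h).2]]
    · simp [hK_supp x h]
  clear_value c
  have hCB : 0 ≤ CB := (abs_nonneg _).trans (hK_abs 0)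
  have hpow : |c u ^ l - c v ^ l| ≤ l * L ^ (l - 1) * |u - v| :=
    calc |c u ^ l - c v ^ l| ≤ |c u - c v| * l * max |c u| |c v| ^ (l - 1) := abs_pow_sub_pow_le ..
      _ ≤ |u - v| * l * L ^ (l - 1) := by
        gcongr ?_ * _ * ?_ ^ _
        · exact hc_dist u v
        · exact max_le (hc_abs u) (hc_abs v)
      _ = _ := by ring
  rw [Real.dist_eq, Real.dist_eq, hc u, hc v]
  calc |K u * c u ^ l - K v * c v ^ l|
        = |K u * (c u ^ l - c v ^ l) + (K u - K v) * c v ^ l| := by ring_nf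
    _ ≤ |K u| * |c u ^ l - c v ^ l| + |K u - K v| * |c v| ^ l := by
        rw [← abs_pow, ← abs_mul, ← abs_mul]; exact abs_add_le _ _
    _ ≤ CB * (l * L ^ (l - 1) * |u - v|) + CK * |u - v| * L ^ l := by
        gcongr
        · exact hK_abs u
        · simpa only [Real.dist_eq] using hK_lip.dist_le_mul u v
        · exact hc_abs v
    _ = _ := by ring

lemma eq_zero_of_le_norm_of_continuous {E F : Type*} [NormedAddCommGroup E] [NormedSpace ℝ E]
    [TopologicalSpace F] [T1Space F] [Zero F] {f : E → F} (hf : Continuous f) {L : ℝ}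
    (hL : L ≠ 0) (h : ∀ x, L < ‖x‖ → f x = 0) {x : E} (hx : L ≤ ‖x‖) : f x = 0 := by
  have hsub : (Metric.closedBall (0 : E) L)ᶜ ⊆ f ⁻¹' {0} := fun y hy =>
    h y (by simpa using hy)
  have hx' : x ∈ closure (Metric.closedBall (0 : E) L)ᶜ := by
    rw [closure_compl, interior_closedBall _ hL]
    simpa using hx
  exact closure_minimal hsub (isClosed_singleton.preimage hf) hx'

lemma card_filter_lt_lt_le (s : Finset ℕ) {a w : ℝ} (hw : 0 ≤ w) :
    ((s.filter fun i : ℕ => a < i ∧ (i : ℝ) < a + w).card : ℝ) ≤ w + 1 := by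
  have hmaps : Set.MapsTo (fun i : ℕ => (i : ℤ)) (s.filter fun i : ℕ => a < i ∧ (i : ℝ) < a + w)
      (Finset.Ioo ⌊a⌋ ⌈a + w⌉) := by
    intro i hi
    simp only [Finset.coe_filter, Set.mem_ofPred_eq] at hi
    simp only [Finset.coe_Ioo, Set.mem_Ioo]
    constructor
    · exact Int.floor_lt.mpr (by exact_mod_cast hi.2.1)
    · exact Int.lt_ceil.mpr (by exact_mod_cast hi.2.2)
  have hcard := Finset.card_le_card_of_injOn _ hmaps (fun i _ j _ h => by exact_mod_cast h)
  rw [Int.card_Ioo] at hcard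
  calc (_ : ℝ) ≤ ((⌈a + w⌉ - ⌊a⌋ - 1).toNat : ℝ) := by exact_mod_cast hcard
    _ = max ((⌈a + w⌉ - ⌊a⌋ - 1 : ℤ) : ℝ) 0 := by
        rw [← Int.cast_natCast, Int.toNat_eq_max]; push_cast; rfl
    _ ≤ w + 1 := max_le (by push_cast; linarith [Int.ceil_lt_add_one (a + w),
        Int.sub_one_lt_floor a]) (by linarith)

lemma abs_mul_sub_intervalIntegral_le {g : ℝ → ℝ} {C : ℝ}
    (hg : ∀ x y, dist (g x) (g y) ≤ C * dist x y) (a : ℝ) {h : ℝ} (hh : 0 ≤ h) :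
    |h * g (a + h) - ∫ x in a..a + h, g x| ≤ C * h ^ 2 := by
  have hC : 0 ≤ C := by simpa using (dist_nonneg.trans (hg 1 0))
  have hint : IntervalIntegrable g MeasureTheory.volume a (a + h) :=
    (LipschitzWith.of_dist_le' hg).continuous.intervalIntegrable _ _
  have hdiff : h * g (a + h) - ∫ x in a..a + h, g x = ∫ x in a..a + h, (g (a + h) - g x) := by
    rw [intervalIntegral.integral_sub intervalIntegrable_const hint,
      intervalIntegral.integral_const, add_sub_cancel_left, smul_eq_mul]
  have hbound : ∀ x ∈ Set.uIoc a (a + h), ‖g (a + h) - g x‖ ≤ C * h := by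
    intro x hx
    rw [Set.uIoc_of_le (by linarith)] at hx
    refine (hg _ _).trans (mul_le_mul_of_nonneg_left ?_ hC)
    rw [Real.dist_eq, abs_of_nonneg (by linarith [hx.2])]
    linarith [hx.1]
  rw [hdiff, ← Real.norm_eq_abs]
  refine (intervalIntegral.norm_integral_le_of_norm_le_const hbound).trans_eq ?_
  rw [add_sub_cancel_left, abs_of_nonneg hh]
  ring

lemma abs_riemannSum_sub_integral_le {g : ℝ → ℝ} {C : ℝ}
    (hg : ∀ x y, dist (g x) (g y) ≤ C * dist x y) {c r : ℝ} (hr : 0 ≤ r)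
    (hg_supp : ∀ x, r ≤ |x - c| → g x = 0) {n : ℕ} (hn : n ≠ 0) :
    |(n : ℝ)⁻¹ * ∑ j ∈ Finset.Icc 1 n, g (j / n) - ∫ x in (0 : ℝ)..1, g x| ≤
      (2 * r * n + 2) * (C / n ^ 2) := by
  have hn' : (0 : ℝ) < n := by positivity
  have hC : 0 ≤ C := by simpa using (dist_nonneg.trans (hg 1 0))
  set h : ℝ := (n : ℝ)⁻¹
  have hgrid : ∀ i : ℕ, ((i + 1 : ℕ) : ℝ) / n = i / n + h := fun i => by
    push_cast; rw [add_div, one_div]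
  set e : ℕ → ℝ := fun i => h * g (i / n + h) - ∫ x in i / n..i / n + h, g x
  have hsum : ∑ j ∈ Finset.Icc 1 n, g (j / n) = ∑ i ∈ Finset.range n, g (i / n + h) := by
    simp_rw [← hgrid]
    rw [Finset.range_eq_Ico, Finset.sum_Ico_add' (fun j : ℕ => g (j / n)), zero_add,
      Finset.Ico_add_one_right_eq_Icc]
  have hint : ∫ x in (0 : ℝ)..1, g x = ∑ i ∈ Finset.range n, ∫ x in i / n..i / n + h, g x := by
    have hcont := (LipschitzWith.of_dist_le' hg).continuous
    simp_rw [← hgrid]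
    rw [intervalIntegral.sum_integral_adjacent_intervals fun k _ => hcont.intervalIntegrable _ _]
    simp [hn'.ne']
  -- only the cells meeting the support `(c - r, c + r)` contribute
  set P : ℕ → Prop := fun i => n * (c - r) - 1 < i ∧ (i : ℝ) < n * (c - r) - 1 + (2 * r * n + 1)
  have he : ∀ i, |e i| ≤ if P i then C / n ^ 2 else 0 := by
    intro i
    split_ifs with hP
    · exact (abs_mul_sub_intervalIntegral_le hg _ (by positivity)).trans_eq
        (by rw [inv_pow, div_eq_mul_inv])
    · have hzero : ∀ x ∈ Set.uIcc ((i : ℝ) / n) (i / n + h), g x = 0 := by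
        intro x hx
        rw [Set.uIcc_of_le (le_add_of_nonneg_right (by positivity))] at hx
        apply hg_supp
        simp only [P, not_and_or, not_lt] at hP
        rcases hP with hP | hP
        · have : (i : ℝ) / n + h ≤ c - r := by
            rw [← hgrid, div_le_iff₀ hn']; push_cast; linarith
          exact le_abs.mpr (Or.inr (by linarith [hx.2]))
        · have : c + r ≤ (i : ℝ) / n := by
            rw [le_div_iff₀ hn']; linarith
          exact le_abs.mpr (Or.inl (by linarith [hx.1]))
      have hcell : e i = 0 := by
        simp only [e, intervalIntegral.integral_congr hzero, hzero _ Set.right_mem_uIcc]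
        simp
      rw [hcell, abs_zero]
  calc |(n : ℝ)⁻¹ * ∑ j ∈ Finset.Icc 1 n, g (j / n) - ∫ x in (0 : ℝ)..1, g x|
      = |∑ i ∈ Finset.range n, e i| := by
        rw [hsum, hint, Finset.mul_sum, ← Finset.sum_sub_distrib]
    _ ≤ ∑ i ∈ Finset.range n, if P i then C / n ^ 2 else 0 :=
        (Finset.abs_sum_le_sum_abs _ _).trans (Finset.sum_le_sum fun i _ => he i)
    _ = ((Finset.range n).filter P).card * (C / n ^ 2) := by
        rw [← Finset.sum_filter, Finset.sum_const, nsmul_eq_mul]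
    _ ≤ (2 * r * n + 2) * (C / n ^ 2) := by
        gcongr
        exact (card_filter_lt_lt_le _ (by positivity)).trans_eq (by ring)

lemma abs_scaledRiemannSum_sub_integral_le {f : ℝ → ℝ} {C L : ℝ}
    (hf : ∀ u v, dist (f u) (f v) ≤ C * dist u v) (hL : 0 ≤ L)
    (hf_supp : ∀ u, L ≤ |u| → f u = 0) {n : ℕ} (hn : n ≠ 0) {b : ℝ} (hb : 0 < b)
    (hnb : 1 ≤ n * b) (t : ℝ) :
    |(n : ℝ)⁻¹ * ∑ j ∈ Finset.Icc 1 n, f ((j / n - t) / b) / b -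
        ∫ u in (-t / b)..((1 - t) / b), f u| ≤ C * (2 * L + 2) / (n * b) := by
  have hn' : (0 : ℝ) < n := by positivity
  have hC : 0 ≤ C := by simpa using (dist_nonneg.trans (hf 1 0))
  set g : ℝ → ℝ := fun x => f ((x - t) / b) / b
  have hg : ∀ x y, dist (g x) (g y) ≤ C / b ^ 2 * dist x y := by
    intro x y
    have := hf ((x - t) / b) ((y - t) / b)
    simp only [g, Real.dist_eq] at this ⊢
    rw [← sub_div, abs_div, abs_of_pos hb]
    rw [← sub_div, sub_sub_sub_cancel_right, abs_div, abs_of_pos hb] at this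
    calc |f ((x - t) / b) - f ((y - t) / b)| / b ≤ C * (|x - y| / b) / b := by gcongr
      _ = C / b ^ 2 * |x - y| := by ring
  have hg_supp : ∀ x, b * L ≤ |x - t| → g x = 0 := by
    intro x hx
    have : L ≤ |(x - t) / b| := by
      rwa [abs_div, abs_of_pos hb, le_div_iff₀ hb, mul_comm]
    simp only [g, hf_supp _ this, zero_div]
  have hint : ∫ x in (0 : ℝ)..1, g x = ∫ u in (-t / b)..((1 - t) / b), f u := by
    simp only [g, sub_div, div_eq_mul_inv (f _), intervalIntegral.integral_mul_const]
    rw [intervalIntegral.integral_comp_div_sub f hb.ne', smul_eq_mul, zero_div, zero_sub, neg_div]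
    field_simp
  rw [← hint]
  calc _ ≤ (2 * (b * L) * n + 2) * (C / b ^ 2 / n ^ 2) :=
        abs_riemannSum_sub_integral_le hg (by positivity) hg_supp hn
    _ = C * (2 * L + 2 * (n * b)⁻¹) / (n * b) := by field_simp
    _ ≤ C * (2 * L + 2) / (n * b) := by
        gcongr
        linarith [inv_le_one_of_one_le₀ hnb]

lemma intervalIntegral_eq_of_eq_zero_of_le_abs {E : Type*} [NormedAddCommGroup E] [NormedSpace ℝ E]
    {f : ℝ → E} {L a d : ℝ} (hf_supp : ∀ u, L ≤ |u| → f u = 0) (ha : a ≤ -L) (hd : L ≤ d) :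
    ∫ u in a..d, f u = ∫ u in (-L)..L, f u := by
  have hsupp : Function.support f ⊆ Set.Ioo (-L) L := fun u hu =>
    abs_lt.mp (not_le.mp fun h => hu (hf_supp u h))
  rw [intervalIntegral.integral_eq_integral_of_support_subset
      (hsupp.trans (Set.Ioo_subset_Ioc_self.trans (Set.Ioc_subset_Ioc ha hd))),
    intervalIntegral.integral_eq_integral_of_support_subset (hsupp.trans Set.Ioo_subset_Ioc_self)]

theorem statement8_general (K : ℝ → ℝ) (L : ℝ) (hL : 0 < L)
    (CK : NNReal) (hK_lip : LipschitzWith CK K)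
    (CB : ℝ) (hK_bdd : ∀ t, K t ≤ CB)
    (hK_nonneg : ∀ t, 0 ≤ K t) (hK_supp : ∀ t, L < |t| → K t = 0)
    (l : ℕ) :
    ∃ C' : ℝ,
      (∀ n : ℕ, 1 ≤ n → ∀ b : ℝ, 0 < b → b ≤ 1 → 1 ≤ (n : ℝ) * b →
        ∀ t ∈ Set.Icc (0 : ℝ) 1,
          |(n : ℝ)⁻¹ * ∑ j ∈ Finset.Icc 1 n,
                (K (((j : ℝ) / n - t) / b) / b) * (((j : ℝ) / n - t) / b) ^ l -
              ∫ u in (-t / b)..((1 - t) / b), K u * u ^ l| ≤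
            C' / ((n : ℝ) * b)) ∧
      (∀ n : ℕ, 1 ≤ n → ∀ b : ℝ, 0 < b → b ≤ 1 → 1 ≤ (n : ℝ) * b →
        ∀ i ∈ Finset.Icc 1 n, (n : ℝ) * b * L ≤ (i : ℝ) → (i : ℝ) ≤ n - (n : ℝ) * b * L →
          |(n : ℝ)⁻¹ * ∑ j ∈ Finset.Icc 1 n,
                (K (((j : ℝ) / n - (i : ℝ) / n) / b) / b) * ((j : ℝ) / n - (i : ℝ) / n) ^ l -
              b ^ l * ∫ u in (-L)..L, K u * u ^ l| ≤
            b ^ l * (C' / ((n : ℝ) * b))) := by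
  have hf_supp : ∀ u, L ≤ |u| → K u * u ^ l = 0 := fun u hu => by
    rw [eq_zero_of_le_norm_of_continuous hK_lip.continuous hL.ne' hK_supp hu, zero_mul]
  have hf := dist_mul_pow_le hL.le hK_lip
    (fun t => (abs_of_nonneg (hK_nonneg t)).trans_le (hK_bdd t)) hK_supp l
  have hest := fun (n : ℕ) (hn : 1 ≤ n) (b : ℝ) (hb : 0 < b) (hnb : 1 ≤ (n : ℝ) * b) t =>
    abs_scaledRiemannSum_sub_integral_le hf hL.le hf_supp (Nat.one_le_iff_ne_zero.mp hn) hb hnb t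
  refine ⟨(CK * L ^ l + CB * l * L ^ (l - 1)) * (2 * L + 2), fun n hn b hb _ hnb t _ => ?_,
    fun n hn b hb _ hnb i _ hil hir => ?_⟩
  · simpa only [div_mul_eq_mul_div] using hest n hn b hb hnb t
  · have hn' : (0 : ℝ) < n := by exact_mod_cast hn
    have ha : -((i : ℝ) / n) / b ≤ -L := by
      rw [neg_div, neg_le_neg_iff, le_div_iff₀ hb, le_div_iff₀ hn']
      linarith
    have hd : L ≤ (1 - (i : ℝ) / n) / b := by
      rw [le_div_iff₀ hb, le_sub_iff_add_le, ← le_sub_iff_add_le', div_le_iff₀ hn']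
      linarith
    have hrescale : ∀ x : ℝ, K (x / b) / b * x ^ l = b ^ l * (K (x / b) * (x / b) ^ l / b) := by
      intro x
      rw [div_pow]
      field_simp
    simp only [hrescale, ← Finset.mul_sum, ← mul_sub, mul_left_comm _ (b ^ l), abs_mul,
      abs_of_pos (pow_pos hb l)]
    gcongr
    simpa [intervalIntegral_eq_of_eq_zero_of_le_abs hf_supp ha hd] using hest n hn b hb hnb (i / n)

theorem statement8 (K : ℝ → ℝ) (L : ℝ) (hL : 0 < L)
    (hK_symm : ∀ t, K (-t) = K t) (CK : NNReal) (hK_lip : LipschitzWith CK K)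
    (CB : ℝ) (hK_bdd : ∀ t, K t ≤ CB)
    (hK_nonneg : ∀ t, 0 ≤ K t) (hK_supp : ∀ t, L < |t| → K t = 0)
    (hK_int : ∫ t, K t = 1)
    (l : ℕ) :
    ∃ C' : ℝ,
      (∀ n : ℕ, 1 ≤ n → ∀ b : ℝ, 0 < b → b ≤ 1 → 1 ≤ (n : ℝ) * b →
        ∀ t ∈ Set.Icc (0 : ℝ) 1,
          |(n : ℝ)⁻¹ * ∑ j ∈ Finset.Icc 1 n,
                (K (((j : ℝ) / n - t) / b) / b) * (((j : ℝ) / n - t) / b) ^ l -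
              ∫ u in (-t / b)..((1 - t) / b), K u * u ^ l| ≤
            C' / ((n : ℝ) * b)) ∧
      (∀ n : ℕ, 1 ≤ n → ∀ b : ℝ, 0 < b → b ≤ 1 → 1 ≤ (n : ℝ) * b →
        ∀ i ∈ Finset.Icc 1 n, (n : ℝ) * b * L ≤ (i : ℝ) → (i : ℝ) ≤ n - (n : ℝ) * b * L →
          |(n : ℝ)⁻¹ * ∑ j ∈ Finset.Icc 1 n,
                (K (((j : ℝ) / n - (i : ℝ) / n) / b) / b) * ((j : ℝ) / n - (i : ℝ) / n) ^ l -
              b ^ l * ∫ u in (-L)..L, K u * u ^ l| ≤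
            b ^ l * (C' / ((n : ℝ) * b))) :=
  statement8_general K L hL CK hK_lip CB hK_bdd hK_nonneg hK_supp l
end

section
/- There exist a constant C > 0 and an integer N such that for all n ≥ N and all i,j ∈ {1,…,n}: n b_n |S_d(i,j)| ≤ C, and S_d(i,j) = 0 whenever |i−j| > n b_n L. Consequently, the rows and columns of S_d have absolute sums bounded by a constant uniformly in n; that is, the family of local linear smoothing matrices S_d is AVUS. -/
/-!
Write `a_k = K_b(t_k - t_i)`, `x_k = t_k - t_i` and `S_m = ∑ₖ a_k x_kᵐ`, so that
`S_d(i,j) = (S₂ - x_j S₁) a_j / (S₀ S₂ - S₁²)`. Since `K_b` vanishes beyond distance `b L`,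
`S_d(i,j) = 0` for `|i - j| > n b L`, and `|S₁| ≤ b L S₀`, `S₂ ≤ (b L)² S₀`, `S₀ = O(n)`.
The determinant is half of `∑_{j,k} a_j a_k (x_j - x_k)²`. A continuous symmetric kernel satisfies
`K ≥ κ > 0` on `t₀ ≤ |u| ≤ t₀ + δ`; on the side of `tᵢ` with room, this gives two groups of about
`n b δ` design points with weights `≥ κ / b`, separated by about `b δ`, so the determinant is of
order `(n b)²`. Hence `n b |S_d(i,j)| = O(1)`; every row and column has `O(n b)` nonzero entries,
and the finitely many small `n` are absorbed into the constant.
-/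

open MeasureTheory ProbabilityTheory Filter Matrix

noncomputable section

/-- Design points `t_i = i/n`, `i = 1,…,n` (here `0`-indexed: `dpt n i = (i+1)/n`). -/
def dpt (n : ℕ) (i : Fin n) : ℝ := ((i : ℕ) + 1) / n

/-- The rescaled kernel `K_b(t) = K(t/b)/b`. -/
def scaledKer (K : ℝ → ℝ) (b t : ℝ) : ℝ := K (t / b) / b

/-- The `2 × 2` matrix `X(t_i)ᵀ W(t_i) X(t_i)` of local linear regression. -/
def locMat (K : ℝ → ℝ) (b : ℝ) (n : ℕ) (i : Fin n) : Matrix (Fin 2) (Fin 2) ℝ :=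
  Matrix.of fun a c =>
    ∑ j : Fin n, scaledKer K b (dpt n j - dpt n i) * (dpt n j - dpt n i) ^ ((a : ℕ) + (c : ℕ))

/-- The local linear smoothing matrix `S_d`:
`S_d(i,j) = (1,0){X(tᵢ)ᵀW(tᵢ)X(tᵢ)}⁻¹(1, tⱼ-tᵢ)ᵀ K_b(tⱼ-tᵢ)`. -/
def smoothMat (K : ℝ → ℝ) (b : ℝ) (n : ℕ) : Matrix (Fin n) (Fin n) ℝ :=
  Matrix.of fun i j =>
    ((locMat K b n i)⁻¹ *ᵥ ![1, dpt n j - dpt n i]) 0 * scaledKer K b (dpt n j - dpt n i)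

open scoped Finset

lemma two_mul_variance_eq {ι : Type*} [Fintype ι] (a x : ι → ℝ) :
    ∑ j, ∑ k, a j * a k * (x j - x k) ^ 2 =
      2 * ((∑ j, a j) * (∑ j, a j * x j ^ 2) - (∑ j, a j * x j) ^ 2) := by
  have hterm : ∀ j k, a j * a k * (x j - x k) ^ 2 =
      a j * x j ^ 2 * a k + a j * (a k * x k ^ 2) - 2 * (a j * x j) * (a k * x k) :=
    fun j k => by ring
  simp only [hterm, Finset.sum_add_distrib, Finset.sum_sub_distrib, ← Finset.mul_sum,
    ← Finset.sum_mul]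
  ring

lemma variance_ge_of_gap {ι : Type*} [Fintype ι] (a x : ι → ℝ) (ha : ∀ j, 0 ≤ a j)
    (P Q : Finset ι) {κ g : ℝ} (hκ : 0 ≤ κ) (hg : 0 ≤ g)
    (hPa : ∀ p ∈ P, κ ≤ a p) (hQa : ∀ q ∈ Q, κ ≤ a q)
    (hgap : ∀ p ∈ P, ∀ q ∈ Q, g ≤ x q - x p) :
    #P * #Q * (κ * g) ^ 2 / 2 ≤ (∑ j, a j) * (∑ j, a j * x j ^ 2) - (∑ j, a j * x j) ^ 2 := by
  have hnonneg : ∀ j k, 0 ≤ a j * a k * (x j - x k) ^ 2 := fun j k => by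
    have := ha j; have := ha k; positivity
  have hPQ : (#P * #Q : ℝ) * (κ * g) ^ 2 ≤ ∑ p ∈ P, ∑ q ∈ Q, a p * a q * (x p - x q) ^ 2 := by
    have hpq : ∀ p ∈ P, ∀ q ∈ Q, (κ * g) ^ 2 ≤ a p * a q * (x p - x q) ^ 2 := by
      intro p hp q hq
      have hsq : g ^ 2 ≤ (x p - x q) ^ 2 := by nlinarith [hgap p hp q hq]
      calc (κ * g) ^ 2 = κ * κ * g ^ 2 := by ring
        _ ≤ a p * a q * (x p - x q) ^ 2 :=
          mul_le_mul (mul_le_mul (hPa p hp) (hQa q hq) hκ (ha p)) hsq (sq_nonneg g)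
            (mul_nonneg (ha p) (ha q))
    calc (#P * #Q : ℝ) * (κ * g) ^ 2 = ∑ p ∈ P, ∑ q ∈ Q, (κ * g) ^ 2 := by
          simp only [Finset.sum_const, nsmul_eq_mul]; ring
      _ ≤ _ := Finset.sum_le_sum fun p hp => Finset.sum_le_sum fun q hq => hpq p hp q hq
  have hsub : ∑ p ∈ P, ∑ q ∈ Q, a p * a q * (x p - x q) ^ 2 ≤
      ∑ j, ∑ k, a j * a k * (x j - x k) ^ 2 := by
    refine (Finset.sum_le_sum fun p _ => ?_).trans
      (Finset.sum_le_sum_of_subset_of_nonneg (Finset.subset_univ P) fun j _ _ =>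
        Finset.sum_nonneg fun k _ => hnonneg j k)
    exact Finset.sum_le_sum_of_subset_of_nonneg (Finset.subset_univ Q) fun k _ _ => hnonneg p k
  linarith [two_mul_variance_eq a x]

lemma abs_sum_mul_pow_le {ι : Type*} [Fintype ι] (a x : ι → ℝ) (ha : ∀ j, 0 ≤ a j) {r : ℝ}
    (hx : ∀ j, a j ≠ 0 → |x j| ≤ r) (m : ℕ) :
    |∑ j, a j * x j ^ m| ≤ r ^ m * ∑ j, a j := by
  rw [Finset.mul_sum]
  refine (Finset.abs_sum_le_sum_abs _ _).trans (Finset.sum_le_sum fun j _ => ?_)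
  rcases eq_or_ne (a j) 0 with h | h
  · simp [h]
  · rw [abs_mul, abs_of_nonneg (ha j), abs_pow, mul_comm (r ^ m)]
    exact mul_le_mul_of_nonneg_left (pow_le_pow_left₀ (abs_nonneg _) (hx j h) m) (ha j)

/-- This holds even when the determinant vanishes: then both sides are `0`, by the conventions
`A⁻¹ = 0` and `x / 0 = 0`. -/
lemma Matrix.inv_mulVec_fin_two_zero {𝕜 : Type*} [Field 𝕜] (A : Matrix (Fin 2) (Fin 2) 𝕜)
    (v : Fin 2 → 𝕜) : (A⁻¹ *ᵥ v) 0 = (A 1 1 * v 0 - A 0 1 * v 1) / A.det := by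
  rw [Matrix.inv_def, Matrix.adjugate_fin_two, Ring.inverse_eq_inv', Matrix.smul_mulVec]
  simp [dotProduct, Fin.sum_univ_two, div_eq_inv_mul, sub_eq_add_neg]

lemma exists_pos_forall_le_of_eventually_le {ι : ℕ → Type*} [∀ n, Fintype (ι n)]
    (f : ∀ n, ι n → ℝ) {C : ℝ} (h : ∀ᶠ n in atTop, ∀ i, f n i ≤ C) :
    ∃ C' > (0 : ℝ), ∀ n i, f n i ≤ C' := by
  obtain ⟨N, hN⟩ := eventually_atTop.1 h
  refine ⟨max C 0 + ∑ m ∈ Finset.range N, ∑ i, |f m i| + 1, by positivity, fun n i => ?_⟩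
  have hT : 0 ≤ ∑ m ∈ Finset.range N, ∑ i, |f m i| := by positivity
  rcases le_or_gt N n with hn | hn
  · linarith [hN n hn i, le_max_left C 0]
  · have hi : |f n i| ≤ ∑ i, |f n i| :=
      Finset.single_le_sum (f := fun i => |f n i|) (fun _ _ => abs_nonneg _) (Finset.mem_univ i)
    have hn : ∑ i, |f n i| ≤ ∑ m ∈ Finset.range N, ∑ i, |f m i| :=
      Finset.single_le_sum (f := fun m => ∑ i, |f m i|) (fun _ _ => by positivity)
        (Finset.mem_range.2 hn)
    linarith [le_abs_self (f n i), le_max_right C 0]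

def indexWindow (n : ℕ) (α β : ℝ) : Finset (Fin n) :=
  {j | α ≤ ((j : ℕ) : ℝ) ∧ ((j : ℕ) : ℝ) ≤ β}

lemma image_indexWindow_subset_Icc (n : ℕ) (α β : ℝ) :
    (indexWindow n α β).image (fun j : Fin n => ((j : ℕ) : ℤ)) ⊆ Finset.Icc ⌈α⌉ ⌊β⌋ := by
  intro m hm
  obtain ⟨j, hj, rfl⟩ := Finset.mem_image.1 hm
  simp only [indexWindow, Finset.mem_filter, Finset.mem_univ, true_and] at hj
  exact Finset.mem_Icc.2
    ⟨Int.ceil_le.2 (by exact_mod_cast hj.1), Int.le_floor.2 (by exact_mod_cast hj.2)⟩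

lemma Icc_subset_image_indexWindow (n : ℕ) (α β : ℝ) (hα : 0 ≤ α) (hβ : β ≤ n - 1) :
    Finset.Icc ⌈α⌉ ⌊β⌋ ⊆ (indexWindow n α β).image (fun j : Fin n => ((j : ℕ) : ℤ)) := by
  intro m hm
  obtain ⟨hαm, hmβ⟩ := Finset.mem_Icc.1 hm
  have hαm : α ≤ m := Int.ceil_le.1 hαm
  have hmβ : (m : ℝ) ≤ β := Int.le_floor.1 hmβ
  lift m to ℕ using by exact_mod_cast hα.trans hαm
  have hmn : m < n := by exact_mod_cast (show (m : ℝ) < n by push_cast at hmβ; linarith)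
  refine Finset.mem_image.2 ⟨⟨m, hmn⟩, ?_, rfl⟩
  simp only [indexWindow, Finset.mem_filter, Finset.mem_univ, true_and]
  exact ⟨by exact_mod_cast hαm, by exact_mod_cast hmβ⟩

lemma card_indexWindow_eq_card_image (n : ℕ) (α β : ℝ) :
    #((indexWindow n α β).image (fun j : Fin n => ((j : ℕ) : ℤ))) = #(indexWindow n α β) :=
  Finset.card_image_of_injective _ fun _ _ h => Fin.ext (by exact_mod_cast h)

lemma cast_card_Icc_ceil_floor (α β : ℝ) :
    (#(Finset.Icc ⌈α⌉ ⌊β⌋) : ℝ) = max ((⌊β⌋ + 1 - ⌈α⌉ : ℤ) : ℝ) 0 := by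
  rw [Int.card_Icc, ← Int.cast_natCast, Int.toNat_eq_max]
  push_cast
  rfl

lemma card_indexWindow_le (n : ℕ) {α β : ℝ} (hαβ : α ≤ β) :
    (#(indexWindow n α β) : ℝ) ≤ β - α + 1 := by
  have hcard : (#(indexWindow n α β) : ℝ) ≤ #(Finset.Icc ⌈α⌉ ⌊β⌋) := by
    rw [← card_indexWindow_eq_card_image]
    exact_mod_cast Finset.card_le_card (image_indexWindow_subset_Icc n α β)
  rw [cast_card_Icc_ceil_floor] at hcard
  refine hcard.trans (max_le ?_ (by linarith))
  push_cast
  linarith [Int.floor_le β, Int.le_ceil α]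

lemma le_card_indexWindow (n : ℕ) {α β : ℝ} (hα : 0 ≤ α) (hβ : β ≤ n - 1) :
    β - α - 1 ≤ #(indexWindow n α β) := by
  have hcard : (#(Finset.Icc ⌈α⌉ ⌊β⌋) : ℝ) ≤ #(indexWindow n α β) := by
    rw [← card_indexWindow_eq_card_image]
    exact_mod_cast Finset.card_le_card (Icc_subset_image_indexWindow n α β hα hβ)
  rw [cast_card_Icc_ceil_floor] at hcard
  refine le_trans ?_ ((le_max_left _ _).trans hcard)
  push_cast
  linarith [Int.lt_floor_add_one β, Int.ceil_lt_add_one α]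

lemma indexWindow_mono {n : ℕ} {α β α' β' : ℝ} (hα : α ≤ α') (hβ : β' ≤ β) :
    indexWindow n α' β' ⊆ indexWindow n α β := by
  intro j hj
  simp only [indexWindow, Finset.mem_filter, Finset.mem_univ, true_and] at hj ⊢
  exact ⟨hα.trans hj.1, hj.2.trans hβ⟩

lemma sum_abs_le_of_eq_zero_outside {n : ℕ} (f : Fin n → ℝ) (c R M : ℝ) (hR : 0 ≤ R) (hM : 0 ≤ M)
    (hfM : ∀ j, |f j| ≤ M) (hf : ∀ j : Fin n, R < |((j : ℕ) : ℝ) - c| → f j = 0) :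
    ∑ j, |f j| ≤ M * (2 * R + 1) := by
  have houtside : ∀ j ∉ indexWindow n (c - R) (c + R), |f j| = 0 := by
    intro j hj
    simp only [indexWindow, Finset.mem_filter, Finset.mem_univ, true_and, not_and_or,
      not_le] at hj
    have hfar : R < |((j : ℕ) : ℝ) - c| := by
      rcases hj with h | h
      · rw [abs_of_neg (by linarith)]; linarith
      · rw [abs_of_pos (by linarith)]; linarith
    rw [hf j hfar, abs_zero]
  calc ∑ j, |f j| = ∑ j ∈ indexWindow n (c - R) (c + R), |f j| :=
        (Finset.sum_subset (Finset.subset_univ _) fun j _ hj => houtside j hj).symm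
    _ ≤ #(indexWindow n (c - R) (c + R)) * M := by
        simpa using Finset.sum_le_card_nsmul _ _ M fun j _ => hfM j
    _ ≤ (c + R - (c - R) + 1) * M := by gcongr; exact card_indexWindow_le n (by linarith)
    _ = M * (2 * R + 1) := by ring

lemma sum_abs_le_of_band {n : ℕ} (f : Fin n → ℝ) (c r L C : ℝ) (hr : 1 ≤ r) (hL : 0 ≤ L)
    (hC : 0 ≤ C) (hf_le : ∀ j, r * |f j| ≤ C)
    (hf : ∀ j : Fin n, r * L < |((j : ℕ) : ℝ) - c| → f j = 0) :
    ∑ j, |f j| ≤ C * (2 * L + 1) := by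
  have hr₀ : 0 < r := by linarith
  calc ∑ j, |f j| ≤ C / r * (2 * (r * L) + 1) :=
        sum_abs_le_of_eq_zero_outside f c _ _ (by positivity) (by positivity)
          (fun j => by rw [le_div_iff₀ hr₀, mul_comm]; exact hf_le j) hf
    _ = 2 * C * L + C / r := by field_simp
    _ ≤ C * (2 * L + 1) := by linarith [div_le_self hC hr]

/-- The outer thirds of a window of `w ≥ 6` grid points each hold at least `w / 6` points and are
`w / (3n)` apart on the scale `1/n`. -/
lemma variance_ge_of_indexWindow {n : ℕ} (a : Fin n → ℝ) (ha : ∀ j, 0 ≤ a j) (s : ℝ)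
    {α w κ : ℝ} (hα : 0 ≤ α) (hαw : α + w ≤ n - 1) (hw : 6 ≤ w) (hκ : 0 ≤ κ)
    (haκ : ∀ j ∈ indexWindow n α (α + w), κ ≤ a j) :
    w ^ 4 * κ ^ 2 / (648 * n ^ 2) ≤
      (∑ j, a j) * (∑ j, a j * (((j : ℕ) - s) / n) ^ 2) - (∑ j, a j * (((j : ℕ) - s) / n)) ^ 2 := by
  have hn : (0 : ℝ) < n := by linarith
  set P := indexWindow n α (α + w / 3)
  set Q := indexWindow n (α + 2 * w / 3) (α + w)
  have hP : w / 6 ≤ #P := by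
    linarith [le_card_indexWindow n hα (show α + w / 3 ≤ n - 1 by linarith)]
  have hQ : w / 6 ≤ #Q := by
    linarith [le_card_indexWindow n (show 0 ≤ α + 2 * w / 3 by linarith) hαw]
  have hgap : ∀ p ∈ P, ∀ q ∈ Q,
      w / (3 * n) ≤ ((q : ℕ) - s) / n - ((p : ℕ) - s) / n := by
    intro p hp q hq
    simp only [P, Q, indexWindow, Finset.mem_filter, Finset.mem_univ, true_and] at hp hq
    rw [← sub_div, div_le_div_iff₀ (by positivity) hn]
    nlinarith
  have := variance_ge_of_gap a (fun j : Fin n => ((j : ℕ) - s) / n) ha P Q hκ (by positivity)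
    (fun p hp => haκ p (indexWindow_mono le_rfl (by linarith) hp))
    (fun q hq => haκ q (indexWindow_mono (by linarith) le_rfl hq)) hgap
  calc w ^ 4 * κ ^ 2 / (648 * n ^ 2) = w / 6 * (w / 6) * (κ * (w / (3 * n))) ^ 2 / 2 := by
        field_simp; ring
    _ ≤ #P * #Q * (κ * (w / (3 * n))) ^ 2 / 2 := by gcongr
    _ ≤ _ := this

lemma exists_pos_of_integral_eq_one {K : ℝ → ℝ} (hK_nonneg : ∀ t, 0 ≤ K t)
    (hK_int : ∫ t, K t = 1) : ∃ s, 0 < K s := by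
  by_contra! h
  have hK0 : K = 0 := funext fun t => le_antisymm (h t) (hK_nonneg t)
  simp [hK0] at hK_int

lemma exists_half_le_on_Icc_of_continuousAt {f : ℝ → ℝ} {t₀ : ℝ} (hf : ContinuousAt f t₀)
    (h : 0 < f t₀) : ∃ δ > 0, ∀ u ∈ Set.Icc t₀ (t₀ + δ), f t₀ / 2 ≤ f u := by
  obtain ⟨ε, hε, hball⟩ := Metric.eventually_nhds_iff.1
    (hf.eventually (lt_mem_nhds (show f t₀ / 2 < f t₀ by linarith)))
  refine ⟨ε / 2, by positivity, fun u hu => (hball ?_).le⟩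
  rw [Real.dist_eq, abs_of_nonneg (by linarith [hu.1])]
  linarith [hu.2]

lemma exists_kernel_lower_bound {K : ℝ → ℝ} (hK_symm : ∀ t, K (-t) = K t) (hK_cont : Continuous K)
    (hK_nonneg : ∀ t, 0 ≤ K t) (hK_int : ∫ t, K t = 1) :
    ∃ t₀ δ κ : ℝ, 0 ≤ t₀ ∧ 0 < δ ∧ 0 < κ ∧ ∀ u, t₀ ≤ |u| → |u| ≤ t₀ + δ → κ ≤ K u := by
  obtain ⟨s, hs⟩ := exists_pos_of_integral_eq_one hK_nonneg hK_int
  have hK_abs : ∀ u, K |u| = K u := fun u => by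
    rcases abs_choice u with h | h <;> simp [h, hK_symm]
  obtain ⟨δ, hδ, hδK⟩ :=
    exists_half_le_on_Icc_of_continuousAt hK_cont.continuousAt (show 0 < K |s| by rwa [hK_abs])
  refine ⟨|s|, δ, K |s| / 2, abs_nonneg s, hδ, by rw [hK_abs]; positivity, fun u h₁ h₂ => ?_⟩
  rw [← hK_abs u]
  exact hδK _ ⟨h₁, h₂⟩

section Grid

variable {K : ℝ → ℝ} {L CB b t₀ δ κ : ℝ} {n : ℕ}

lemma dpt_sub (i j : Fin n) : dpt n j - dpt n i = (((j : ℕ) : ℝ) - (i : ℕ)) / n := by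
  unfold dpt; ring

lemma scaledKer_nonneg (hK_nonneg : ∀ t, 0 ≤ K t) (hb : 0 ≤ b) (t : ℝ) : 0 ≤ scaledKer K b t :=
  div_nonneg (hK_nonneg _) hb

lemma scaledKer_le (hK_bdd : ∀ t, K t ≤ CB) (hb : 0 < b) (t : ℝ) : scaledKer K b t ≤ CB / b :=
  div_le_div_of_nonneg_right (hK_bdd _) hb.le

lemma abs_le_of_scaledKer_ne_zero (hK_supp : ∀ t, L < |t| → K t = 0) (hb : 0 < b) {t : ℝ}
    (h : scaledKer K b t ≠ 0) : |t| ≤ b * L := by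
  by_contra! ht
  refine h ?_
  rw [scaledKer, hK_supp _ (by rw [abs_div, abs_of_pos hb, lt_div_iff₀ hb]; linarith), zero_div]

lemma scaledKer_dpt_eq_zero (hK_supp : ∀ t, L < |t| → K t = 0) (hb : 0 < b) (i j : Fin n)
    (h : n * b * L < |((j : ℕ) : ℝ) - (i : ℕ)|) : scaledKer K b (dpt n j - dpt n i) = 0 := by
  by_contra hne
  have hn : (0 : ℝ) < n := by exact_mod_cast i.pos
  have := abs_le_of_scaledKer_ne_zero hK_supp hb hne
  rw [dpt_sub, abs_div, abs_of_pos hn, div_le_iff₀ hn] at this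
  linarith

lemma det_locMat (i : Fin n) :
    (locMat K b n i).det =
      (∑ j, scaledKer K b (dpt n j - dpt n i)) *
        (∑ j, scaledKer K b (dpt n j - dpt n i) * (dpt n j - dpt n i) ^ 2) -
      (∑ j, scaledKer K b (dpt n j - dpt n i) * (dpt n j - dpt n i)) ^ 2 := by
  simp [Matrix.det_fin_two, locMat, sq]

lemma smoothMat_apply (i j : Fin n) :
    smoothMat K b n i j =
      ((∑ k, scaledKer K b (dpt n k - dpt n i) * (dpt n k - dpt n i) ^ 2) -
        (dpt n j - dpt n i) * ∑ k, scaledKer K b (dpt n k - dpt n i) * (dpt n k - dpt n i)) /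
        (locMat K b n i).det * scaledKer K b (dpt n j - dpt n i) := by
  rw [smoothMat, Matrix.of_apply, Matrix.inv_mulVec_fin_two_zero]
  simp [locMat, sq, mul_comm]

lemma sum_scaledKer_dpt_le (hK_nonneg : ∀ t, 0 ≤ K t) (hK_bdd : ∀ t, K t ≤ CB)
    (hK_supp : ∀ t, L < |t| → K t = 0) (hL : 0 ≤ L) (hb : 0 < b) (i : Fin n) :
    ∑ j, scaledKer K b (dpt n j - dpt n i) ≤ CB / b * (2 * (n * b * L) + 1) := by
  have hCB : 0 ≤ CB := (hK_nonneg 0).trans (hK_bdd 0)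
  have hnonneg := scaledKer_nonneg hK_nonneg hb.le (K := K)
  calc ∑ j, scaledKer K b (dpt n j - dpt n i) = ∑ j, |scaledKer K b (dpt n j - dpt n i)| := by
        simp only [abs_of_nonneg (hnonneg _)]
    _ ≤ _ := sum_abs_le_of_eq_zero_outside _ (i : ℕ) _ _ (by positivity) (by positivity)
        (fun j => by rw [abs_of_nonneg (hnonneg _)]; exact scaledKer_le hK_bdd hb _)
        (fun j hj => scaledKer_dpt_eq_zero hK_supp hb i j hj)

lemma le_scaledKer_dpt (hK_win : ∀ u, t₀ ≤ |u| → |u| ≤ t₀ + δ → κ ≤ K u) (hb : 0 < b)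
    (i j : Fin n) (h₁ : n * b * t₀ ≤ |((j : ℕ) : ℝ) - (i : ℕ)|)
    (h₂ : |((j : ℕ) : ℝ) - (i : ℕ)| ≤ n * b * (t₀ + δ)) :
    κ / b ≤ scaledKer K b (dpt n j - dpt n i) := by
  have hnb : (0 : ℝ) < n * b := mul_pos (by exact_mod_cast i.pos) hb
  have habs : |(dpt n j - dpt n i) / b| = |((j : ℕ) : ℝ) - (i : ℕ)| / (n * b) := by
    rw [dpt_sub, div_div, abs_div, abs_of_pos hnb]
  refine div_le_div_of_nonneg_right (hK_win _ ?_ ?_) hb.le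
  · rw [habs, le_div_iff₀ hnb]; linarith
  · rw [habs, div_le_iff₀ hnb]; linarith

/-- On whichever side of `tᵢ` there is room, the design points `tⱼ` with
`t₀ ≤ |tⱼ - tᵢ| / b ≤ t₀ + δ` form a window of `n b δ` consecutive indices. -/
lemma det_locMat_ge (hK_nonneg : ∀ t, 0 ≤ K t)
    (hK_win : ∀ u, t₀ ≤ |u| → |u| ≤ t₀ + δ → κ ≤ K u) (ht₀ : 0 ≤ t₀) (hκ : 0 ≤ κ)
    (hb : 0 < b) (hnbδ : 6 ≤ n * b * δ) (hroom : 2 * (n * b * (t₀ + δ)) ≤ n - 1) (i : Fin n) :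
    (n * b) ^ 2 * κ ^ 2 * δ ^ 4 / 648 ≤ (locMat K b n i).det := by
  have hn : (0 : ℝ) < n := by exact_mod_cast i.pos
  have hi : ((i : ℕ) : ℝ) ≤ n - 1 := by
    have := i.isLt; rw [Nat.lt_iff_add_one_le] at this
    linarith [show ((i : ℕ) : ℝ) + 1 ≤ n by exact_mod_cast this]
  have hwin : ∀ α, 0 ≤ α → α + n * b * δ ≤ n - 1 →
      (∀ j ∈ indexWindow n α (α + n * b * δ),
        n * b * t₀ ≤ |((j : ℕ) : ℝ) - (i : ℕ)| ∧ |((j : ℕ) : ℝ) - (i : ℕ)| ≤ n * b * (t₀ + δ)) →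
      (n * b) ^ 2 * κ ^ 2 * δ ^ 4 / 648 ≤ (locMat K b n i).det := by
    intro α hα hαn hj
    have := variance_ge_of_indexWindow _ (fun j => scaledKer_nonneg hK_nonneg hb.le _) (i : ℕ)
      hα hαn hnbδ (div_nonneg hκ hb.le)
      (fun j hjw => le_scaledKer_dpt hK_win hb i j (hj j hjw).1 (hj j hjw).2)
    simp only [← dpt_sub] at this
    rw [det_locMat]
    refine le_trans (le_of_eq ?_) this
    field_simp
  have hnbt₀ : 0 ≤ n * b * t₀ := by positivity
  have hsplit : n * b * (t₀ + δ) = n * b * t₀ + n * b * δ := by ring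
  rcases le_total ((i : ℕ) : ℝ) ((n - 1) / 2) with hleft | hright
  · refine hwin (i + n * b * t₀) (by positivity) (by linarith) fun j hj => ?_
    simp only [indexWindow, Finset.mem_filter, Finset.mem_univ, true_and] at hj
    rw [abs_of_nonneg (by linarith)]
    constructor <;> linarith
  · refine hwin (i - n * b * (t₀ + δ)) (by linarith) (by linarith) fun j hj => ?_
    simp only [indexWindow, Finset.mem_filter, Finset.mem_univ, true_and] at hj
    rw [abs_of_nonpos (by linarith)]
    constructor <;> linarith

lemma smoothMat_eq_zero_of_lt (hK_supp : ∀ t, L < |t| → K t = 0) (hb : 0 < b) (i j : Fin n)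
    (h : n * b * L < |((i : ℕ) : ℝ) - (j : ℕ)|) : smoothMat K b n i j = 0 := by
  rw [smoothMat_apply, scaledKer_dpt_eq_zero hK_supp hb i j (by rwa [abs_sub_comm]), mul_zero]

lemma mul_abs_smoothMat_le (hK_nonneg : ∀ t, 0 ≤ K t) (hK_bdd : ∀ t, K t ≤ CB)
    (hK_supp : ∀ t, L < |t| → K t = 0) (hK_win : ∀ u, t₀ ≤ |u| → |u| ≤ t₀ + δ → κ ≤ K u)
    (hL : 0 ≤ L) (ht₀ : 0 ≤ t₀) (hδ : 0 < δ) (hκ : 0 < κ) (hb : 0 < b) (hnb : 1 ≤ n * b)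
    (hnbδ : 6 ≤ n * b * δ) (hroom : 2 * (n * b * (t₀ + δ)) ≤ n - 1) (i j : Fin n) :
    n * b * |smoothMat K b n i j| ≤ 1296 * CB ^ 2 * L ^ 2 * (2 * L + 1) / (κ ^ 2 * δ ^ 4) := by
  set a := fun k => scaledKer K b (dpt n k - dpt n i) with ha_def
  set x := fun k => dpt n k - dpt n i
  have ha : ∀ k, 0 ≤ a k := fun k => scaledKer_nonneg hK_nonneg hb.le _
  have hCB : 0 ≤ CB := (hK_nonneg 0).trans (hK_bdd 0)
  have hdet := det_locMat_ge hK_nonneg hK_win ht₀ hκ.le hb hnbδ hroom i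
  have hD : 0 < (n * b) ^ 2 * κ ^ 2 * δ ^ 4 / 648 := by positivity
  rw [smoothMat_apply]
  rcases eq_or_ne (a j) 0 with h0 | h0
  · simp only [ha_def] at h0
    rw [h0, mul_zero, abs_zero, mul_zero]
    positivity
  have hx : ∀ k, a k ≠ 0 → |x k| ≤ b * L := fun k hk => abs_le_of_scaledKer_ne_zero hK_supp hb hk
  have hS₁ := abs_sum_mul_pow_le a x ha hx 1
  have hS₂ := abs_sum_mul_pow_le a x ha hx 2
  simp only [pow_one] at hS₁
  have hS₀ : ∑ k, a k ≤ CB / b * (n * b * (2 * L + 1)) :=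
    (sum_scaledKer_dpt_le hK_nonneg hK_bdd hK_supp hL hb i).trans
      (by gcongr; nlinarith)
  have hnum : |∑ k, a k * x k ^ 2 - x j * ∑ k, a k * x k| ≤ 2 * (b * L) ^ 2 * ∑ k, a k :=
    calc _ ≤ |∑ k, a k * x k ^ 2| + |x j| * |∑ k, a k * x k| :=
          (abs_sub _ _).trans (by rw [abs_mul])
      _ ≤ (b * L) ^ 2 * ∑ k, a k + b * L * (b * L * ∑ k, a k) :=
          add_le_add hS₂ (mul_le_mul (hx j h0) hS₁ (abs_nonneg _) (by positivity))
      _ = 2 * (b * L) ^ 2 * ∑ k, a k := by ring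
  rw [abs_mul, abs_div, abs_of_pos (hD.trans_le hdet), abs_of_nonneg (ha j)]
  calc n * b * (|∑ k, a k * x k ^ 2 - x j * ∑ k, a k * x k| / (locMat K b n i).det * a j)
      ≤ n * b * (2 * (b * L) ^ 2 * (CB / b * (n * b * (2 * L + 1))) /
          ((n * b) ^ 2 * κ ^ 2 * δ ^ 4 / 648) * (CB / b)) := by
        gcongr
        · exact ha j
        · exact hnum.trans (by gcongr)
        · exact scaledKer_le hK_bdd hb _
    _ = 1296 * CB ^ 2 * L ^ 2 * (2 * L + 1) / (κ ^ 2 * δ ^ 4) := by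
        have : (0 : ℝ) < n := by exact_mod_cast i.pos
        field_simp
        ring

end Grid

/-- The AVUS bound for a single matrix, with constant `C`. -/
def AbsSumsLE {n : ℕ} (A : Matrix (Fin n) (Fin n) ℝ) (C : ℝ) : Prop :=
  (∀ i, ∑ j, |A i j| ≤ C) ∧ (∀ j, ∑ i, |A i j| ≤ C)

lemma absSumsLE_of_band {n : ℕ} (A : Matrix (Fin n) (Fin n) ℝ) {r L C : ℝ} (hr : 1 ≤ r)
    (hL : 0 ≤ L) (hC : 0 ≤ C) (hA_le : ∀ i j, r * |A i j| ≤ C)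
    (hA : ∀ i j : Fin n, r * L < |((i : ℕ) : ℝ) - (j : ℕ)| → A i j = 0) :
    AbsSumsLE A (C * (2 * L + 1)) :=
  ⟨fun i => sum_abs_le_of_band _ i r L C hr hL hC (hA_le i) fun j hj =>
      hA i j (by rwa [abs_sub_comm]),
    fun j => sum_abs_le_of_band _ j r L C hr hL hC (hA_le · j) fun i hi => hA i j hi⟩

lemma exists_forall_absSumsLE_of_eventually (A : ∀ n : ℕ, Matrix (Fin n) (Fin n) ℝ) {C : ℝ}
    (h : ∀ᶠ n in atTop, AbsSumsLE (A n) C) : ∃ C' > (0 : ℝ), ∀ n, AbsSumsLE (A n) C' := by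
  obtain ⟨C', hC', hbound⟩ := exists_pos_forall_le_of_eventually_le
    (fun n => Sum.elim (fun i => ∑ j, |A n i j|) (fun j => ∑ i, |A n i j|))
    (h.mono fun n hn => by rintro (i | j); exacts [hn.1 i, hn.2 j])
  exact ⟨C', hC', fun n => ⟨fun i => hbound n (.inl i), fun j => hbound n (.inr j)⟩⟩

lemma eventually_bandwidth_conditions {b : ℕ → ℝ} (hb_lim : Tendsto b atTop (nhds 0))
    (hnb_lim : Tendsto (fun n : ℕ => (n : ℝ) * b n) atTop atTop) {δ c : ℝ} (hδ : 0 < δ) :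
    ∀ᶠ n : ℕ in atTop, 1 ≤ n * b n ∧ 6 ≤ n * b n * δ ∧ 2 * (n * b n * c) ≤ n - 1 := by
  have hbc : Tendsto (fun n => b n * c) atTop (nhds 0) := by simpa using hb_lim.mul_const c
  filter_upwards [hnb_lim.eventually_ge_atTop 1, hnb_lim.eventually_ge_atTop (6 / δ),
    hbc.eventually_le_const (show (0 : ℝ) < 1 / 4 by norm_num), eventually_ge_atTop 2]
    with n h₁ h₆ hsmall hn
  refine ⟨h₁, (div_le_iff₀ hδ).1 h₆, ?_⟩
  have hn : (2 : ℝ) ≤ n := by exact_mod_cast hn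
  have := mul_le_mul_of_nonneg_left hsmall (by positivity : (0 : ℝ) ≤ 2 * n)
  linarith

theorem statement9 (K : ℝ → ℝ) (L : ℝ) (hL : 0 < L)
    (hK_symm : ∀ t, K (-t) = K t) (CK : NNReal) (hK_lip : LipschitzWith CK K)
    (CB : ℝ) (hK_bdd : ∀ t, K t ≤ CB)
    (hK_nonneg : ∀ t, 0 ≤ K t) (hK_supp : ∀ t, L < |t| → K t = 0)
    (hK_int : ∫ t, K t = 1)
    (b : ℕ → ℝ) (hb_pos : ∀ n, 0 < b n)
    (hb_lim : Tendsto b atTop (nhds 0))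
    (hnb_lim : Tendsto (fun n : ℕ => (n : ℝ) * b n) atTop atTop) :
    (∃ C > (0 : ℝ), ∃ N : ℕ, ∀ n ≥ N, ∀ i j : Fin n,
      (n : ℝ) * b n * |smoothMat K (b n) n i j| ≤ C ∧
      ((n : ℝ) * b n * L < |((i : ℕ) : ℝ) - ((j : ℕ) : ℝ)| → smoothMat K (b n) n i j = 0)) ∧
    ∃ C₂ > (0 : ℝ), ∀ n : ℕ,
      (∀ i : Fin n, ∑ j, |smoothMat K (b n) n i j| ≤ C₂) ∧
      (∀ j : Fin n, ∑ i, |smoothMat K (b n) n i j| ≤ C₂) := by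
  obtain ⟨t₀, δ, κ, ht₀, hδ, hκ, hK_win⟩ :=
    exists_kernel_lower_bound hK_symm hK_lip.continuous hK_nonneg hK_int
  have hCB : 0 < CB :=
    hκ.trans_le ((hK_win t₀ (abs_of_nonneg ht₀).ge (by rw [abs_of_nonneg ht₀]; linarith)).trans
      (hK_bdd t₀))
  set C := 1296 * CB ^ 2 * L ^ 2 * (2 * L + 1) / (κ ^ 2 * δ ^ 4)
  obtain ⟨N, hN⟩ := eventually_atTop.1 (eventually_bandwidth_conditions hb_lim hnb_lim hδ
    (c := t₀ + δ))
  have hentry : ∀ n ≥ N, ∀ i j : Fin n,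
      (n : ℝ) * b n * |smoothMat K (b n) n i j| ≤ C ∧
      ((n : ℝ) * b n * L < |((i : ℕ) : ℝ) - ((j : ℕ) : ℝ)| → smoothMat K (b n) n i j = 0) :=
    fun n hn i j =>
      ⟨mul_abs_smoothMat_le hK_nonneg hK_bdd hK_supp hK_win hL.le ht₀ hδ hκ (hb_pos n)
        (hN n hn).1 (hN n hn).2.1 (hN n hn).2.2 i j,
      smoothMat_eq_zero_of_lt hK_supp (hb_pos n) i j⟩
  exact ⟨⟨C, by positivity, N, hentry⟩, exists_forall_absSumsLE_of_eventually _
    (eventually_atTop.2 ⟨N, fun n hn => absSumsLE_of_band _ (hN n hn).1 hL.le (by positivity)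
      (fun i j => (hentry n hn i j).1) (fun i j => (hentry n hn i j).2)⟩)⟩
end
end
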